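/- arXiv:2208.06944 — 2 statements merged into one kernel-verified Lean document; each statement's English description precedes it below -/
import Mathlib

section
/- Let α be irrational with continued fraction denominators q_m and θ ∈ ℝ such that η/(10 q_{2j}) ≤ ‖2θ + k_j α‖_{ℝ/ℤ} for some integer k_j, with 0 < η ≤ 10⁻². Then for any k = k_j + l₁ q_{2j} with integer l₁ satisfying |l₁| ≤ η q_{2j+1}/(30 q_{2j}), one has ‖2θ + kα‖_{ℝ/ℤ} ≥ ‖2θ + k_j α‖_{ℝ/ℤ} − |l₁|/q_{2j+1} ≥ η/(20 q_{2j}). -/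
/-- Distance from a real number to the nearest integer, ‖x‖_{ℝ/ℤ}. -/
noncomputable def normZ (x : ℝ) : ℝ := |x - round x|

/-- The Gauss map. -/
noncomputable def cfGauss (x : ℝ) : ℝ := Int.fract x⁻¹

/-- Partial quotients of α ∈ (0,1): `cfA α n` is the paper's a_{n+1}. -/
noncomputable def cfA (α : ℝ) (n : ℕ) : ℤ := ⌊(cfGauss^[n] α)⁻¹⌋

/-- Continued fraction denominators: q_0 = 1, q_1 = a_1, q_{n+2} = a_{n+2} q_{n+1} + q_n. -/
noncomputable def cfQ (α : ℝ) : ℕ → ℤ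
  | 0 => 1
  | 1 => cfA α 0
  | (n + 2) => cfA α (n + 1) * cfQ α (n + 1) + cfQ α n

/-- Continued fraction numerators: p_0 = 0, p_1 = 1, p_{n+2} = a_{n+2} p_{n+1} + p_n. -/
noncomputable def cfP (α : ℝ) : ℕ → ℤ
  | 0 => 0
  | 1 => 1
  | (n + 2) => cfA α (n + 1) * cfP α (n + 1) + cfP α n

/-!
Passing from `k_j` to `k = k_j + l₁ q_{2j}` moves `2θ + k α` by `l₁ (q_{2j} α)`, whose distance to `ℤ`
is at most `|l₁| ‖q_{2j} α‖ ≤ |l₁| / q_{2j+1}`; the reverse triangle inequality in `ℝ/ℤ` gives the first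
bound. The constraint on `|l₁|` makes this loss at most `η / (30 q_{2j})`, and
`η/10 - η/30 ≥ η/20`. Positivity of the `q_n` comes from the partial quotients being `≥ 1`, since the
Gauss map keeps an irrational number of `(0,1)` inside `(0,1)`.
-/

lemma normZ_eq_norm_unitAddCircle (x : ℝ) : normZ x = ‖(x : UnitAddCircle)‖ :=
  UnitAddCircle.norm_eq.symm

lemma normZ_sub_normZ_le_normZ_add (x y : ℝ) : normZ x - normZ y ≤ normZ (x + y) := by
  simpa only [normZ_eq_norm_unitAddCircle, AddCircle.coe_add] using norm_sub_le_norm_add _ _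

lemma normZ_intCast_mul_le (n : ℤ) (x : ℝ) : normZ (n * x) ≤ |(n : ℝ)| * normZ x := by
  simpa only [normZ_eq_norm_unitAddCircle, ← zsmul_eq_mul, AddCircle.coe_zsmul, Int.norm_eq_abs]
    using norm_zsmul_le n (x : UnitAddCircle)

lemma normZ_sub_div_le_normZ_add_intCast_mul {β Q : ℝ} (hβ : normZ β ≤ 1 / Q) (x : ℝ) (l : ℤ) :
    normZ x - |(l : ℝ)| / Q ≤ normZ (x + l * β) := by
  have hlβ : normZ (l * β) ≤ |(l : ℝ)| / Q :=
    calc normZ (l * β) ≤ |(l : ℝ)| * normZ β := normZ_intCast_mul_le l β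
      _ ≤ |(l : ℝ)| * (1 / Q) := by gcongr
      _ = |(l : ℝ)| / Q := mul_one_div _ _
  linarith [normZ_sub_normZ_le_normZ_add x (l * β)]

lemma irrational_cfGauss {x : ℝ} (hx : Irrational x) : Irrational (cfGauss x) :=
  hx.inv.sub_intCast _

lemma cfGauss_mem_Ioo {x : ℝ} (hx : Irrational x) : cfGauss x ∈ Set.Ioo 0 1 :=
  ⟨Int.fract_pos.2 (hx.inv.ne_int _), Int.fract_lt_one _⟩

lemma irrational_cfGauss_iterate {x : ℝ} (hx : Irrational x) (n : ℕ) :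
    Irrational (cfGauss^[n] x) := by
  induction n with
  | zero => exact hx
  | succ n ih => simpa only [Function.iterate_succ_apply'] using irrational_cfGauss ih

lemma cfGauss_iterate_mem_Ioo {α : ℝ} (hα : Irrational α) (h0 : 0 < α) (h1 : α < 1) (n : ℕ) :
    cfGauss^[n] α ∈ Set.Ioo 0 1 := by
  cases n with
  | zero => exact ⟨h0, h1⟩
  | succ n =>
    simpa only [Function.iterate_succ_apply'] using cfGauss_mem_Ioo (irrational_cfGauss_iterate hα n)

lemma cfA_pos {α : ℝ} (hα : Irrational α) (h0 : 0 < α) (h1 : α < 1) (n : ℕ) : 0 < cfA α n := by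
  obtain ⟨hpos, hlt⟩ := cfGauss_iterate_mem_Ioo hα h0 h1 n
  exact Int.floor_pos.2 ((one_le_inv₀ hpos).2 hlt.le)

lemma cfQ_pos {α : ℝ} (hα : Irrational α) (h0 : 0 < α) (h1 : α < 1) (n : ℕ) : 0 < cfQ α n := by
  induction n using Nat.twoStepInduction with
  | zero => exact one_pos
  | one => exact cfA_pos hα h0 h1 0
  | more n ih₀ ih₁ => exact add_pos (mul_pos (cfA_pos hα h0 h1 _) ih₁) ih₀

theorem stmt6_general (α θ η : ℝ) (hα : Irrational α) (h0 : 0 < α) (h1 : α < 1)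
    (hη0 : 0 < η) (j : ℕ) (kj : ℤ)
    (hθ : η / (10 * (cfQ α (2 * j) : ℝ)) ≤ normZ (2 * θ + (kj : ℝ) * α))
    (hqup : normZ ((cfQ α (2 * j) : ℝ) * α) ≤ 1 / (cfQ α (2 * j + 1) : ℝ))
    (k l₁ : ℤ) (hk : k = kj + l₁ * cfQ α (2 * j))
    (hl₁ : |(l₁ : ℝ)| ≤ η * (cfQ α (2 * j + 1) : ℝ) / (30 * (cfQ α (2 * j) : ℝ))) :
    normZ (2 * θ + (kj : ℝ) * α) - |(l₁ : ℝ)| / (cfQ α (2 * j + 1) : ℝ)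
        ≤ normZ (2 * θ + (k : ℝ) * α)
    ∧ η / (20 * (cfQ α (2 * j) : ℝ))
        ≤ normZ (2 * θ + (kj : ℝ) * α) - |(l₁ : ℝ)| / (cfQ α (2 * j + 1) : ℝ) := by
  have hq : (0 : ℝ) < cfQ α (2 * j) := mod_cast cfQ_pos hα h0 h1 _
  have hq' : (0 : ℝ) < cfQ α (2 * j + 1) := mod_cast cfQ_pos hα h0 h1 _
  have hshift : 2 * θ + (k : ℝ) * α = (2 * θ + kj * α) + l₁ * (cfQ α (2 * j) * α) := by
    rw [hk]; push_cast; ring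
  have hloss : |(l₁ : ℝ)| / cfQ α (2 * j + 1) ≤ η / (30 * cfQ α (2 * j)) :=
    (div_le_iff₀ hq').2 (hl₁.trans_eq (by ring))
  have hbudget : η / (20 * cfQ α (2 * j)) + η / (30 * cfQ α (2 * j)) ≤ η / (10 * cfQ α (2 * j)) := by
    field_simp; nlinarith
  refine ⟨?_, by linarith⟩
  rw [hshift]
  exact normZ_sub_div_le_normZ_add_intCast_mul hqup _ _

/-- small divisor estimate (3) of the Proposition. -/
theorem stmt6 (α θ η : ℝ) (hα : Irrational α) (h0 : 0 < α) (h1 : α < 1)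
    (hη0 : 0 < η) (hη1 : η ≤ 1 / 100) (j : ℕ) (kj : ℤ)
    (hθ : η / (10 * (cfQ α (2 * j) : ℝ)) ≤ normZ (2 * θ + (kj : ℝ) * α))
    (hqup : normZ ((cfQ α (2 * j) : ℝ) * α) ≤ 1 / (cfQ α (2 * j + 1) : ℝ))
    (k l₁ : ℤ) (hk : k = kj + l₁ * cfQ α (2 * j))
    (hl₁ : |(l₁ : ℝ)| ≤ η * (cfQ α (2 * j + 1) : ℝ) / (30 * (cfQ α (2 * j) : ℝ))) :
    normZ (2 * θ + (kj : ℝ) * α) - |(l₁ : ℝ)| / (cfQ α (2 * j + 1) : ℝ)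
        ≤ normZ (2 * θ + (k : ℝ) * α)
    ∧ η / (20 * (cfQ α (2 * j) : ℝ))
        ≤ normZ (2 * θ + (kj : ℝ) * α) - |(l₁ : ℝ)| / (cfQ α (2 * j + 1) : ℝ) :=
  stmt6_general α θ η hα h0 h1 hη0 j kj hθ hqup k l₁ hk hl₁
end

section
/- If additionally liminf_{n→∞} a_n = ∞ (where a_n are the continued fraction partial quotients of α), then for the constructed θ one has lim_{j→∞} k_j/q_{2j-1} = η, and consequently δ(α,θ) = β(α)/η exactly. -/
/-!
Since `|k_j - η q_{2j-1}| ≤ 100 q_{2j-2}` and `a_{2j-2} q_{2j-2} ≤ q_{2j-1}`, the ratio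
`k_j / q_{2j-1}` is within `100 / a_{2j-2}` of `η`, which tends to `0` as `a_n → ∞`.
Then `ln q_{2j} / k_j` is `ln q_{2j} / q_{2j-1}` times a factor tending to `η⁻¹`, and a limsup
of nonnegative terms times a sequence with positive limit is multiplied by that limit.
-/

open Filter Topology

section ContinuedFraction

variable {α : ℝ} (hα : Irrational α) (h0 : 0 < α) (h1 : α < 1)
include hα h0 h1

lemma cfGauss_iterate_mem (n : ℕ) :
    Irrational (cfGauss^[n] α) ∧ cfGauss^[n] α ∈ Set.Ioo 0 1 := by
  induction n with
  | zero => exact ⟨hα, h0, h1⟩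
  | succ n ih =>
    rw [Function.iterate_succ_apply']
    have hinv : Irrational (cfGauss^[n] α)⁻¹ := ih.1.inv
    exact ⟨hinv.sub_intCast _, Int.fract_pos.2 (hinv.ne_int _), Int.fract_lt_one _⟩

lemma one_le_cfA (n : ℕ) : 1 ≤ cfA α n := by
  obtain ⟨-, hpos, hlt⟩ := cfGauss_iterate_mem hα h0 h1 n
  exact Int.le_floor.2 (by exact_mod_cast ((one_lt_inv₀ hpos).2 hlt).le)

lemma one_le_cfQ : ∀ n, 1 ≤ cfQ α n
  | 0 => le_rfl
  | 1 => one_le_cfA hα h0 h1 0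
  | n + 2 => by
    have hq₀ := one_le_cfQ n
    have hq₁ := one_le_cfQ (n + 1)
    have ha := one_le_cfA hα h0 h1 (n + 1)
    rw [cfQ]
    nlinarith

lemma cfA_mul_cfQ_le_cfQ_succ : ∀ n, cfA α n * cfQ α n ≤ cfQ α (n + 1)
  | 0 => by simp [cfQ]
  | n + 1 => by
    rw [cfQ]
    linarith [one_le_cfQ hα h0 h1 n]

end ContinuedFraction

lemma tendsto_div_of_abs_sub_mul_le {ι : Type*} {l : Filter ι} {x y z a : ι → ℝ} {η C : ℝ}
    (hC : 0 ≤ C) (ha : Tendsto a l atTop) (hy : ∀ᶠ i in l, 0 < y i)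
    (hx : ∀ᶠ i in l, |x i - η * y i| ≤ C * z i) (hz : ∀ᶠ i in l, a i * z i ≤ y i) :
    Tendsto (fun i => x i / y i) l (𝓝 η) := by
  have hbound : ∀ᶠ i in l, ‖x i / y i - η‖ ≤ C / a i := by
    filter_upwards [hy, hx, hz, ha.eventually_gt_atTop 0] with i hyi hxi hzi hai
    calc ‖x i / y i - η‖ = |x i - η * y i| / y i := by
          rw [Real.norm_eq_abs, div_sub' hyi.ne', abs_div, abs_of_pos hyi, mul_comm]
      _ ≤ C * z i / y i := by gcongr
      _ ≤ C / a i := by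
          rw [div_le_div_iff₀ hyi hai]
          nlinarith
  exact tendsto_sub_nhds_zero_iff.1
    (squeeze_zero_norm' hbound (tendsto_const_nhds.div_atTop ha))

lemma Real.limsup_mul_of_tendsto {ι : Type*} {l : Filter ι} [l.NeBot] {u v : ι → ℝ} {c : ℝ}
    (hu : 0 ≤ᶠ[l] u) (hu_bdd : IsBoundedUnder (· ≤ ·) l u) (hv : Tendsto v l (𝓝 c))
    (hc : 0 < c) :
    limsup (u * v) l = limsup u l * c := by
  have hv₀ : 0 ≤ᶠ[l] v := (hv.eventually_const_lt hc).mono fun _ h => h.le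
  apply le_antisymm
  · simpa only [hv.limsup_eq] using
      limsup_mul_le hu.frequently hu_bdd hv₀ hv.isBoundedUnder_le
  · simpa only [hv.liminf_eq] using
      le_limsup_mul hu.frequently hu_bdd hv₀ hv.isBoundedUnder_le

theorem stmt13_general (α η : ℝ) (hα : Irrational α) (h0 : 0 < α) (h1 : α < 1)
    (hη0 : 0 < η)
    (ha : Filter.Tendsto (fun n : ℕ => (cfA α n : ℝ)) Filter.atTop Filter.atTop)
    (β : ℝ)
    (hβ0 : 0 < β)
    (hβeven : Filter.limsup
        (fun j : ℕ => Real.log (cfQ α (2 * j)) / (cfQ α (2 * j - 1) : ℝ)) Filter.atTop = β)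
    (k : ℕ → ℤ)
    (hkbound : ∀ j, 1 ≤ j →
      |(k j : ℝ) - η * (cfQ α (2 * j - 1) : ℝ)| ≤ 100 * (cfQ α (2 * j - 2) : ℝ))
    (δ : ℝ)
    (hδdef : δ = Filter.limsup (fun j : ℕ => Real.log (cfQ α (2 * j)) / (k j : ℝ)) Filter.atTop) :
    Filter.Tendsto (fun j : ℕ => (k j : ℝ) / (cfQ α (2 * j - 1) : ℝ)) Filter.atTop (nhds η)
    ∧ δ = β / η := by
  have hq : ∀ n, (1 : ℝ) ≤ cfQ α n := fun n => by exact_mod_cast one_le_cfQ hα h0 h1 n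
  have hq_pos : ∀ n, (0 : ℝ) < cfQ α n := fun n => one_pos.trans_le (hq n)
  have hidx : Tendsto (fun j : ℕ => 2 * j - 2) atTop atTop :=
    tendsto_atTop_atTop.2 fun b => ⟨b + 2, fun j hj => by omega⟩
  have hratio : Tendsto (fun j : ℕ => (k j : ℝ) / cfQ α (2 * j - 1)) atTop (𝓝 η) := by
    refine tendsto_div_of_abs_sub_mul_le (z := fun j => cfQ α (2 * j - 2)) (by norm_num)
      (ha.comp hidx) (.of_forall fun j => hq_pos _) (eventually_ge_atTop 1 |>.mono hkbound)
      (eventually_ge_atTop 1 |>.mono fun j hj => ?_)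
    have hj' : 2 * j - 1 = 2 * j - 2 + 1 := by omega
    rw [hj', Function.comp_apply]
    exact_mod_cast cfA_mul_cfQ_le_cfQ_succ hα h0 h1 (2 * j - 2)
  refine ⟨hratio, ?_⟩
  have hsplit : (fun j : ℕ => Real.log (cfQ α (2 * j)) / (k j : ℝ)) =
      (fun j => Real.log (cfQ α (2 * j)) / cfQ α (2 * j - 1)) *
        fun j => (cfQ α (2 * j - 1) : ℝ) / k j := by
    ext j
    simp only [Pi.mul_apply]
    rw [div_mul_div_cancel₀ (hq_pos _).ne']
  have hinv : Tendsto (fun j : ℕ => (cfQ α (2 * j - 1) : ℝ) / k j) atTop (𝓝 η⁻¹) := by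
    simpa only [inv_div] using hratio.inv₀ hη0.ne'
  -- the limsup of an unbounded real sequence is the junk value `0`, excluded by `0 < β`
  have hbdd : IsBoundedUnder (· ≤ ·) atTop
      fun j : ℕ => Real.log (cfQ α (2 * j)) / cfQ α (2 * j - 1) :=
    not_imp_comm.1 Real.limsup_of_not_isBoundedUnder (hβeven ▸ hβ0.ne')
  rw [hδdef, hsplit, Real.limsup_mul_of_tendsto
    (.of_forall fun j => div_nonneg (Real.log_nonneg (hq _)) (hq_pos _).le) hbdd hinv
    (inv_pos.2 hη0), hβeven, div_eq_mul_inv]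

/-- if a_n → ∞ then k_j/q_{2j-1} → η and δ(α,θ) = β(α)/η. -/
theorem stmt13 (α η : ℝ) (hα : Irrational α) (h0 : 0 < α) (h1 : α < 1)
    (hη0 : 0 < η) (hη1 : η ≤ 1 / 100)
    (ha : Filter.Tendsto (fun n : ℕ => (cfA α n : ℝ)) Filter.atTop Filter.atTop)
    (β : ℝ)
    (hβdef : β = Filter.limsup (fun n : ℕ => Real.log (cfQ α (n + 1)) / (cfQ α n : ℝ)) Filter.atTop)
    (hβ0 : 0 < β)
    (hβeven : Filter.limsup
        (fun j : ℕ => Real.log (cfQ α (2 * j)) / (cfQ α (2 * j - 1) : ℝ)) Filter.atTop = β)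
    (j₀ : ℕ) (k : ℕ → ℤ)
    (hkrec : ∀ j, j₀ ≤ j →
      k (j + 1) = k j + ⌊η * (cfQ α (2 * j + 1) : ℝ) / (cfQ α (2 * j) : ℝ)⌋ * cfQ α (2 * j))
    (hkbound : ∀ j, 1 ≤ j →
      |(k j : ℝ) - η * (cfQ α (2 * j - 1) : ℝ)| ≤ 100 * (cfQ α (2 * j - 2) : ℝ))
    (δ : ℝ)
    (hδdef : δ = Filter.limsup (fun j : ℕ => Real.log (cfQ α (2 * j)) / (k j : ℝ)) Filter.atTop) :
    Filter.Tendsto (fun j : ℕ => (k j : ℝ) / (cfQ α (2 * j - 1) : ℝ)) Filter.atTop (nhds η)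
    ∧ δ = β / η :=
  stmt13_general α η hα h0 h1 hη0 ha β hβ0 hβeven k hkbound δ hδdef
end
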